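/- arXiv:0704.2372 — 3 statements merged into one kernel-verified Lean document; each statement's English description precedes it below -/
import Mathlib

section
/- Let $d \ge 3$, $m \in (0,1)$ and $0 < D_1 < D_0$. The difference $V_{D_1} - V_{D_0}$ belongs to $L^p(\mathbb{R}^d)$ if and only if $p > p(m) := \frac{d(1-m)}{2(2-m)}$. In particular, $V_{D_1} - V_{D_0}$ is Lebesgue integrable on $\mathbb{R}^d$ if and only if $m > m_* := \frac{d-4}{d-2}$. -/
open MeasureTheory Real Filter
noncomputable section

/-- Barenblatt profile. -/
def V (d : ℕ) (m D : ℝ) (x : EuclideanSpace ℝ (Fin d)) : ℝ :=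
  (D + (1 - m) / (2 * m) * ‖x‖ ^ 2) ^ (-(1 / (1 - m)) : ℝ)

open Set Module

/-!
By the mean value theorem for `t ↦ t ^ (-1/(1-m))`, the difference `V_{D₁} - V_{D₀}` lies between
two constant multiples of `(1 + ‖x‖²) ^ (-(2-m)/(1-m))`. A power `(1 + ‖x‖²) ^ (-r/2)` is integrable
on a `d`-dimensional space iff `d < r`: in polar coordinates the borderline case `r = d` becomes
`∫₁^∞ dy / y`. Hence it lies in `Lᵖ` iff `d < r p`, which for `r = 2(2-m)/(1-m)` reads
`p > d(1-m)/(2(2-m))`; for `p = 1` this is `m > (d-4)/(d-2)`.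
-/

theorem not_integrableOn_Ioi_pow_mul_rpow_neg_one_add_sq {n : ℕ} (hn : n ≠ 0) :
    ¬ IntegrableOn (fun y : ℝ ↦ y ^ (n - 1) • (1 + y ^ 2) ^ (-(n : ℝ) / 2)) (Ioi 0) := by
  intro h
  refine not_integrableOn_Ioi_inv (a := 1) <|
    ((h.mono_set (Ioi_subset_Ioi zero_le_one)).const_mul (2 ^ ((n : ℝ) / 2))).mono'
      measurable_inv.aestronglyMeasurable ?_
  filter_upwards [ae_restrict_mem measurableSet_Ioi] with y (hy : 1 < y)
  have hy0 : 0 < y := zero_lt_one.trans hy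
  have hsq : (2 * y ^ 2) ^ (-(n : ℝ) / 2) = 2 ^ (-(n : ℝ) / 2) * y ^ (-(n : ℝ)) := by
    rw [mul_rpow zero_le_two (by positivity), ← rpow_natCast y 2, ← rpow_mul hy0.le]
    ring_nf
  have hpow : y ^ (n - 1) * y ^ (-(n : ℝ)) = y⁻¹ := by
    rw [← rpow_natCast, ← rpow_add hy0, Nat.cast_sub (Nat.one_le_iff_ne_zero.mpr hn),
      ← rpow_neg_one]
    ring_nf
  have htwo : (2 : ℝ) ^ ((n : ℝ) / 2) * 2 ^ (-(n : ℝ) / 2) = 1 := by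
    rw [← rpow_add two_pos]; simp [neg_div]
  have hinv : y⁻¹ = 2 ^ ((n : ℝ) / 2) * (y ^ (n - 1) * (2 * y ^ 2) ^ (-(n : ℝ) / 2)) := by
    rw [hsq, ← hpow]
    linear_combination (y ^ (n - 1) * y ^ (-(n : ℝ))) * htwo.symm
  rw [norm_inv, norm_of_nonneg hy0.le, hinv, smul_eq_mul]
  gcongr ?_ * (_ * ?_)
  exact rpow_le_rpow_of_nonpos (by positivity) (by nlinarith)
    (by linarith [n.cast_nonneg (α := ℝ)])

theorem memLp_iff_of_ae_mem_Icc_mul {α : Type*} [MeasurableSpace α] {μ : Measure α}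
    {p : ENNReal} {f g : α → ℝ} (hf : AEStronglyMeasurable f μ) (hg : AEStronglyMeasurable g μ)
    {c₁ c₂ : ℝ} (hc₁ : 0 < c₁) (hg0 : ∀ᵐ x ∂μ, 0 ≤ g x)
    (hfg : ∀ᵐ x ∂μ, f x ∈ Icc (c₁ * g x) (c₂ * g x)) :
    MemLp f p μ ↔ MemLp g p μ := by
  refine ⟨fun h ↦ h.of_le_mul (c := c₁⁻¹) hg ?_, fun h ↦ h.of_le_mul (c := c₂) hf ?_⟩ <;>
    filter_upwards [hg0, hfg] with x hgx ⟨hlow, hup⟩ <;>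
    rw [norm_of_nonneg hgx, norm_of_nonneg ((mul_nonneg hc₁.le hgx).trans hlow)]
  · rwa [le_inv_mul_iff₀ hc₁]
  · exact hup

section

variable {E : Type*} [NormedAddCommGroup E] [NormedSpace ℝ E] [FiniteDimensional ℝ E]
  [Nontrivial E] [MeasurableSpace E] [BorelSpace E] {μ : Measure E} [μ.IsAddHaarMeasure]

theorem integrable_rpow_neg_one_add_norm_sq_iff {r : ℝ} :
    Integrable (fun x : E ↦ (1 + ‖x‖ ^ 2) ^ (-r / 2)) μ ↔ finrank ℝ E < r := by
  refine ⟨fun h ↦ ?_, integrable_rpow_neg_one_add_norm_sq⟩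
  by_contra! hr
  have hdim : Integrable (fun x : E ↦ (1 + ‖x‖ ^ 2) ^ (-(finrank ℝ E : ℝ) / 2)) μ := by
    refine h.mono' (Measurable.aestronglyMeasurable (by fun_prop)) (.of_forall fun x ↦ ?_)
    rw [norm_of_nonneg (by positivity)]
    exact rpow_le_rpow_of_exponent_le (by simp) (by linarith)
  rw [integrable_fun_norm_addHaar μ (f := fun y ↦ (1 + y ^ 2) ^ (-(finrank ℝ E : ℝ) / 2))] at hdim
  exact not_integrableOn_Ioi_pow_mul_rpow_neg_one_add_sq finrank_pos.ne' hdim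

theorem memLp_rpow_neg_one_add_norm_sq_iff {r p : ℝ} (hp : 0 < p) :
    MemLp (fun x : E ↦ (1 + ‖x‖ ^ 2) ^ (-r / 2)) (ENNReal.ofReal p) μ ↔ finrank ℝ E < r * p := by
  rw [← integrable_norm_rpow_iff (Measurable.aestronglyMeasurable (by fun_prop)) (by simpa)
      ENNReal.ofReal_ne_top,
    ENNReal.toReal_ofReal hp.le, ← integrable_rpow_neg_one_add_norm_sq_iff (μ := μ)]
  refine integrable_congr (.of_forall fun x ↦ ?_)
  dsimp only
  rw [norm_of_nonneg (by positivity), ← rpow_mul (by positivity)]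
  ring_nf

end

theorem rpow_neg_sub_rpow_neg_mem_Icc {a b α : ℝ} (ha : 0 < a) (hab : a < b) (hα : 0 < α) :
    a ^ (-α) - b ^ (-α) ∈ Icc (α * (b - a) * b ^ (-α - 1)) (α * (b - a) * a ^ (-α - 1)) := by
  obtain ⟨ξ, ⟨haξ, hξb⟩, hslope⟩ := exists_hasDerivAt_eq_slope (fun t ↦ t ^ (-α))
    (fun t ↦ -α * t ^ (-α - 1)) hab
    (fun t ht ↦ (continuousAt_rpow_const t _ (.inl (ha.trans_le ht.1).ne')).continuousWithinAt)
    (fun t ht ↦ hasDerivAt_rpow_const (.inl (ha.trans ht.1).ne'))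
  have hξ : a ^ (-α) - b ^ (-α) = α * (b - a) * ξ ^ (-α - 1) := by
    rw [eq_div_iff (sub_pos.2 hab).ne'] at hslope
    linear_combination hslope
  have hexp : -α - 1 ≤ 0 := by linarith
  rw [hξ]
  constructor <;> gcongr α * (b - a) * ?_
  · exact rpow_le_rpow_of_nonpos (ha.trans haξ) hξb.le hexp
  · exact rpow_le_rpow_of_nonpos ha haξ.le hexp

theorem exists_V_sub_V_mem_Icc {d : ℕ} {m D0 D1 : ℝ} (hm0 : 0 < m) (hm1 : m < 1) (hD1 : 0 < D1)
    (hD : D1 < D0) :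
    ∃ c₁ c₂ : ℝ, 0 < c₁ ∧ ∀ x : EuclideanSpace ℝ (Fin d),
      V d m D1 x - V d m D0 x ∈
        Icc (c₁ * (1 + ‖x‖ ^ 2) ^ (-(1 / (1 - m)) - 1))
          (c₂ * (1 + ‖x‖ ^ 2) ^ (-(1 / (1 - m)) - 1)) := by
  set α := 1 / (1 - m)
  set c := (1 - m) / (2 * m)
  have hα : 0 < α := one_div_pos.2 (sub_pos.2 hm1)
  have hc : 0 < c := div_pos (sub_pos.2 hm1) (by positivity)
  have hexp : -α - 1 ≤ 0 := by linarith
  set k := min D1 c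
  set K := max D0 c
  have hk : 0 < k := lt_min hD1 hc
  have hK : 0 < K := hc.trans_le (le_max_right _ _)
  refine ⟨α * (D0 - D1) * K ^ (-α - 1), α * (D0 - D1) * k ^ (-α - 1), by
    have := sub_pos.2 hD; positivity, fun x ↦ ?_⟩
  have ha : 0 < D1 + c * ‖x‖ ^ 2 := by positivity
  have hab : D1 + c * ‖x‖ ^ 2 < D0 + c * ‖x‖ ^ 2 := by linarith
  have hka : k * (1 + ‖x‖ ^ 2) ≤ D1 + c * ‖x‖ ^ 2 := by
    nlinarith [min_le_left D1 c, min_le_right D1 c, sq_nonneg ‖x‖]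
  have hbK : D0 + c * ‖x‖ ^ 2 ≤ K * (1 + ‖x‖ ^ 2) := by
    nlinarith [le_max_left D0 c, le_max_right D0 c, sq_nonneg ‖x‖]
  obtain ⟨hlow, hup⟩ := rpow_neg_sub_rpow_neg_mem_Icc ha hab hα
  simp only [add_sub_add_right_eq_sub] at hlow hup
  show (D1 + c * ‖x‖ ^ 2) ^ (-α) - (D0 + c * ‖x‖ ^ 2) ^ (-α) ∈ _
  rw [mul_assoc _ (K ^ _), mul_assoc _ (k ^ _), ← mul_rpow hK.le (by positivity),
    ← mul_rpow hk.le (by positivity)]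
  have hδ : 0 ≤ α * (D0 - D1) := mul_nonneg hα.le (sub_nonneg.2 hD.le)
  exact ⟨hlow.trans' <| mul_le_mul_of_nonneg_left
      (rpow_le_rpow_of_nonpos (ha.trans hab) hbK hexp) hδ,
    hup.trans <| mul_le_mul_of_nonneg_left
      (rpow_le_rpow_of_nonpos (mul_pos hk (by positivity)) hka hexp) hδ⟩

theorem barenblatt_difference_Lp_iff (d : ℕ) (hd : 3 ≤ d) (m D0 D1 : ℝ) (hm0 : 0 < m)
    (hm1 : m < 1) (hD1 : 0 < D1) (hD : D1 < D0) :
    (∀ p : ℝ, 0 < p →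
      (MemLp (fun x : EuclideanSpace ℝ (Fin d) => V d m D1 x - V d m D0 x)
          (ENNReal.ofReal p) volume ↔ (d : ℝ) * (1 - m) / (2 * (2 - m)) < p)) ∧
    (Integrable (fun x : EuclideanSpace ℝ (Fin d) => V d m D1 x - V d m D0 x) ↔
      ((d : ℝ) - 4) / ((d : ℝ) - 2) < m) := by
  have : NeZero d := ⟨by omega⟩
  have h1m : 0 < 1 - m := sub_pos.2 hm1
  obtain ⟨c₁, c₂, hc₁, hbounds⟩ := exists_V_sub_V_mem_Icc (d := d) hm0 hm1 hD1 hD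
  have hexp : -(1 / (1 - m)) - 1 = -(2 * (2 - m) / (1 - m)) / 2 := by
    field_simp
    ring
  simp only [hexp] at hbounds
  have hmemLp (p : ℝ) (hp : 0 < p) :
      MemLp (fun x : EuclideanSpace ℝ (Fin d) ↦ V d m D1 x - V d m D0 x) (ENNReal.ofReal p) ↔
        (d : ℝ) < 2 * (2 - m) / (1 - m) * p := by
    have hprofile := memLp_rpow_neg_one_add_norm_sq_iff (E := EuclideanSpace ℝ (Fin d))
      (μ := volume) (r := 2 * (2 - m) / (1 - m)) hp
    rw [finrank_euclideanSpace_fin] at hprofile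
    rw [← hprofile]
    exact memLp_iff_of_ae_mem_Icc_mul (by unfold V; fun_prop)
      (Measurable.aestronglyMeasurable (by fun_prop)) hc₁
      (.of_forall fun x ↦ by positivity) (.of_forall hbounds)
  have hd2 : (0 : ℝ) < d - 2 := by
    have : (3 : ℝ) ≤ d := by exact_mod_cast hd
    linarith
  refine ⟨fun p hp ↦ ?_, ?_⟩
  · rw [hmemLp p hp, div_mul_eq_mul_div, lt_div_iff₀ h1m, div_lt_iff₀ (by linarith)]
    constructor <;> intro h <;> linarith
  · rw [← memLp_one_iff_integrable, ← ENNReal.ofReal_one, hmemLp 1 one_pos, mul_one,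
      lt_div_iff₀ h1m, div_lt_iff₀ hd2]
    constructor <;> intro h <;> linarith
end
end

section
/- Let $d \ge 5$, $0 < m < m_* = \frac{d-4}{d-2}$ and $D > 0$. Then for all $x \in \mathbb{R}^d$, $\frac{|\Delta V_D(x)|}{V_D(x)^{2-m}} \ge \frac{(d-2)(m_*-m)}{m(1-m)}$ and $\frac{|\nabla V_D(x)|^2}{|\Delta V_D(x)|\, V_D(x)} \le \frac{2}{(d-2)(m_*-m)}$. -/
/-!
Write `V_D(x) = P(|x|²)` with `P(t) = (D + c t)^(-1/(1-m))`, `c = (1-m)/(2m)`. The profile solves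
`P' = -P^(2-m)/(2m)`, hence `P'' = (2-m)/(4m²) P^(3-2m)`, and `P^(1-m) = 1/(D + c t)`. For a
function of `|x|²` one has `∇V = 2P'(|x|²) x` and `ΔV = 2d P'(|x|²) + 4|x|² P''(|x|²)`, so both are
explicit: `-2m² ΔV = V^(3-2m) (2dDm + K|x|²)` with `K = (d-2)(m_* - m)`. The first ratio is then
`(2dDm + K|x|²) / (2m²D + m(1-m)|x|²)`, which is at least `K/(m(1-m))` because `K ≤ d(1-m)`;
the second is `2|x|² / (2dDm + K|x|²) ≤ 2/K`.
-/

open MeasureTheory Real Filter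
noncomputable section

/-- Laplacian as sum of second partial derivatives. -/
def lap (d : ℕ) (f : EuclideanSpace ℝ (Fin d) → ℝ) (x : EuclideanSpace ℝ (Fin d)) : ℝ :=
  ∑ i : Fin d, fderiv ℝ (fun y => fderiv ℝ f y (EuclideanSpace.single i 1)) x
    (EuclideanSpace.single i 1)

section RadialFunctions

variable {E : Type*} [NormedAddCommGroup E] [InnerProductSpace ℝ E] {φ : ℝ → ℝ} {a : ℝ} {x : E}

theorem HasDerivAt.hasFDerivAt_comp_norm_sq (h : HasDerivAt φ a (‖x‖ ^ 2)) :
    HasFDerivAt (fun y => φ (‖y‖ ^ 2)) ((2 * a) • innerSL ℝ x) x := by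
  refine (h.comp_hasFDerivAt x (hasStrictFDerivAt_norm_sq x).hasFDerivAt).congr_fderiv ?_
  ext v
  simp only [smul_apply, coe_innerSL_apply, nsmul_eq_mul, Nat.cast_ofNat, smul_eq_mul]
  ring

theorem HasDerivAt.gradient_comp_norm_sq [CompleteSpace E] (h : HasDerivAt φ a (‖x‖ ^ 2)) :
    gradient (fun y => φ (‖y‖ ^ 2)) x = (2 * a) • x := by
  refine HasGradientAt.gradient ?_
  rw [hasGradientAt_iff_hasFDerivAt]
  refine h.hasFDerivAt_comp_norm_sq.congr_fderiv ?_
  ext v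
  simp

end RadialFunctions

section Laplacian

variable {d : ℕ} {φ φ' : ℝ → ℝ} {a φ'' : ℝ} {x : EuclideanSpace ℝ (Fin d)}

theorem HasDerivAt.fderiv_comp_norm_sq_single (h : HasDerivAt φ a (‖x‖ ^ 2)) (i : Fin d) :
    fderiv ℝ (fun y => φ (‖y‖ ^ 2)) x (EuclideanSpace.single i 1) = 2 * a * x i := by
  simp [h.hasFDerivAt_comp_norm_sq.fderiv, EuclideanSpace.inner_single_right]

theorem lap_comp_norm_sq (hφ : ∀ t, 0 ≤ t → HasDerivAt φ (φ' t) t)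
    (hφ' : HasDerivAt φ' φ'' (‖x‖ ^ 2)) :
    lap d (fun y => φ (‖y‖ ^ 2)) x = 2 * d * φ' (‖x‖ ^ 2) + 4 * φ'' * ‖x‖ ^ 2 := by
  have hpartial (i : Fin d) :
      (fun y => fderiv ℝ (fun y => φ (‖y‖ ^ 2)) y (EuclideanSpace.single i 1)) =
        fun y => 2 * φ' (‖y‖ ^ 2) * y i :=
    funext fun y => (hφ _ (by positivity)).fderiv_comp_norm_sq_single i
  have hsecond (i : Fin d) :
      fderiv ℝ (fun y => 2 * φ' (‖y‖ ^ 2) * y i) x (EuclideanSpace.single i 1) =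
        2 * φ' (‖x‖ ^ 2) + 4 * φ'' * x i ^ 2 := by
    have h : HasFDerivAt (fun y => 2 * φ' (‖y‖ ^ 2) * y i) _ x :=
      (hφ'.hasFDerivAt_comp_norm_sq.const_mul 2).mul
      (EuclideanSpace.proj i : EuclideanSpace ℝ (Fin d) →L[ℝ] ℝ).hasFDerivAt
    rw [h.fderiv]
    simp only [add_apply, smul_apply, PiLp.proj_apply, PiLp.single_eq_same, smul_eq_mul, mul_one,
      coe_innerSL_apply, EuclideanSpace.inner_single_right, ringHom_apply, one_mul, add_right_inj]
    ring
  rw [lap]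
  simp only [hpartial, hsecond]
  rw [Finset.sum_add_distrib, ← Finset.mul_sum, ← Finset.mul_sum, ← EuclideanSpace.real_norm_sq_eq]
  simp only [Finset.sum_const, Finset.card_univ, Fintype.card_fin, nsmul_eq_mul]
  ring

end Laplacian

namespace Barenblatt

variable {m D t : ℝ}

def base (m D t : ℝ) : ℝ := D + (1 - m) / (2 * m) * t

def profile (m D t : ℝ) : ℝ := base m D t ^ (-(1 / (1 - m)))

theorem V_eq_profile (d : ℕ) (m D : ℝ) : V d m D = fun x => profile m D (‖x‖ ^ 2) := rfl

theorem base_pos (hm0 : 0 < m) (hm1 : m < 1) (hD : 0 < D) (ht : 0 ≤ t) : 0 < base m D t := by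
  have : 0 ≤ (1 - m) / (2 * m) * t := mul_nonneg (div_nonneg (by linarith) (by linarith)) ht
  exact add_pos_of_pos_of_nonneg hD this

theorem profile_pos (hB : 0 < base m D t) : 0 < profile m D t := rpow_pos_of_pos hB _

theorem profile_rpow_one_sub (hm : m ≠ 1) (hB : 0 < base m D t) :
    profile m D t ^ (1 - m) = (base m D t)⁻¹ := by
  rw [profile, ← rpow_mul hB.le, neg_mul, one_div_mul_cancel (sub_ne_zero.2 hm.symm),
    rpow_neg_one]

theorem hasDerivAt_profile (hm : m ≠ 1) (hB : 0 < base m D t) :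
    HasDerivAt (profile m D) (-(1 / (2 * m)) * profile m D t ^ (2 - m)) t := by
  have hbase : HasDerivAt (base m D) ((1 - m) / (2 * m)) t :=
    (((hasDerivAt_id t).const_mul _).const_add D).congr_deriv (mul_one _)
  refine (hbase.rpow_const (p := -(1 / (1 - m))) (Or.inl hB.ne')).congr_deriv ?_
  have h1m : 1 - m ≠ 0 := sub_ne_zero.2 hm.symm
  have hexp : -(1 / (1 - m)) * (2 - m) = -(1 / (1 - m)) - 1 := by field_simp; ring
  rw [profile, ← rpow_mul hB.le, hexp]
  field_simp

theorem hasDerivAt_profile_deriv (hm : m ≠ 1) (hB : 0 < base m D t) :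
    HasDerivAt (fun s => -(1 / (2 * m)) * profile m D s ^ (2 - m))
      ((2 - m) / (4 * m ^ 2) * profile m D t ^ (3 - 2 * m)) t := by
  refine (((hasDerivAt_profile hm hB).rpow_const (p := 2 - m)
    (Or.inl (profile_pos hB).ne')).const_mul (-(1 / (2 * m)))).congr_deriv ?_
  rw [show (3 : ℝ) - 2 * m = (2 - m) + (2 - m - 1) by ring, rpow_add (profile_pos hB)]
  ring

variable {d : ℕ}

theorem V_rpow_two_sub (hm0 : 0 < m) (hm1 : m < 1) (hD : 0 < D) (x : EuclideanSpace ℝ (Fin d)) :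
    V d m D x ^ (2 - m) = V d m D x / base m D (‖x‖ ^ 2) := by
  have hB := base_pos hm0 hm1 hD (sq_nonneg ‖x‖)
  change profile m D (‖x‖ ^ 2) ^ (2 - m) = profile m D (‖x‖ ^ 2) / base m D (‖x‖ ^ 2)
  rw [show 2 - m = 1 + (1 - m) by ring, rpow_add (profile_pos hB), rpow_one,
    profile_rpow_one_sub hm1.ne hB, div_eq_mul_inv]

theorem V_rpow_three_sub (hm0 : 0 < m) (hm1 : m < 1) (hD : 0 < D) (x : EuclideanSpace ℝ (Fin d)) :
    V d m D x ^ (3 - 2 * m) = V d m D x / base m D (‖x‖ ^ 2) ^ 2 := by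
  have hB := base_pos hm0 hm1 hD (sq_nonneg ‖x‖)
  change profile m D (‖x‖ ^ 2) ^ (3 - 2 * m) = profile m D (‖x‖ ^ 2) / base m D (‖x‖ ^ 2) ^ 2
  rw [show 3 - 2 * m = 1 + ((1 - m) + (1 - m)) by ring, rpow_add (profile_pos hB),
    rpow_add (profile_pos hB), rpow_one, profile_rpow_one_sub hm1.ne hB]
  ring

theorem gradient_V (hm0 : 0 < m) (hm1 : m < 1) (hD : 0 < D) (x : EuclideanSpace ℝ (Fin d)) :
    gradient (V d m D) x = (-(1 / m) * V d m D x ^ (2 - m)) • x := by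
  rw [V_eq_profile, (hasDerivAt_profile hm1.ne
    (base_pos hm0 hm1 hD (sq_nonneg ‖x‖))).gradient_comp_norm_sq]
  ring_nf

theorem lap_V (hm0 : 0 < m) (hm1 : m < 1) (hD : 0 < D) (x : EuclideanSpace ℝ (Fin d)) :
    lap d (V d m D) x = -(V d m D x * (2 * d * D * m + (d - 4 - m * (d - 2)) * ‖x‖ ^ 2)) /
      (2 * m ^ 2 * base m D (‖x‖ ^ 2) ^ 2) := by
  have hB := base_pos hm0 hm1 hD (sq_nonneg ‖x‖)
  have hderiv (t : ℝ) (ht : 0 ≤ t) := hasDerivAt_profile hm1.ne (base_pos hm0 hm1 hD ht)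
  have h2 := V_rpow_two_sub hm0 hm1 hD x
  have h3 := V_rpow_three_sub hm0 hm1 hD x
  rw [V_eq_profile] at h2 h3 ⊢
  rw [lap_comp_norm_sq hderiv (hasDerivAt_profile_deriv hm1.ne hB), h2, h3, base]
  field_simp
  ring

theorem div_le_abs_lap_V_div (hm0 : 0 < m) (hm1 : m < 1) (hD : 0 < D)
    (x : EuclideanSpace ℝ (Fin d)) :
    (d - 4 - m * (d - 2)) / (m * (1 - m)) ≤ |lap d (V d m D) x| / V d m D x ^ (2 - m) := by
  have hB := base_pos hm0 hm1 hD (sq_nonneg ‖x‖)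
  have hv : 0 < V d m D x := profile_pos hB
  calc (d - 4 - m * (d - 2)) / (m * (1 - m))
      ≤ (2 * d * D * m + (d - 4 - m * (d - 2)) * ‖x‖ ^ 2) / (2 * m ^ 2 * base m D (‖x‖ ^ 2)) := by
        rw [div_le_div_iff₀ (mul_pos hm0 (by linarith)) (by positivity), base]
        field_simp
        nlinarith [mul_pos (mul_pos hm0 hD) (by linarith : 0 < 2 - m)]
    _ = -lap d (V d m D) x / V d m D x ^ (2 - m) := by
        rw [lap_V hm0 hm1 hD, V_rpow_two_sub hm0 hm1 hD]
        field_simp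
    _ ≤ |lap d (V d m D) x| / V d m D x ^ (2 - m) :=
        div_le_div_of_nonneg_right (neg_le_abs _) (by positivity)

theorem norm_gradient_V_sq_div_le (hm0 : 0 < m) (hm1 : m < 1) (hD : 0 < D)
    (hK : 0 < (d : ℝ) - 4 - m * (d - 2)) (x : EuclideanSpace ℝ (Fin d)) :
    ‖gradient (V d m D) x‖ ^ 2 / (|lap d (V d m D) x| * V d m D x) ≤ 2 / (d - 4 - m * (d - 2)) := by
  have hB := base_pos hm0 hm1 hD (sq_nonneg ‖x‖)
  have hv : 0 < V d m D x := profile_pos hB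
  have hd : (0 : ℝ) < d := by nlinarith
  rw [gradient_V hm0 hm1 hD, norm_smul, mul_pow, norm_eq_abs, sq_abs, V_rpow_two_sub hm0 hm1 hD,
    lap_V hm0 hm1 hD, neg_div, abs_neg, abs_of_pos (by positivity),
    div_le_div_iff₀ (by positivity) hK]
  field_simp
  nlinarith [mul_pos (mul_pos hd hD) hm0]

end Barenblatt

theorem barenblatt_weight_estimates (d : ℕ) (hd : 5 ≤ d) (m D : ℝ) (hm0 : 0 < m)
    (hm : m < ((d : ℝ) - 4) / ((d : ℝ) - 2)) (hD : 0 < D) (x : EuclideanSpace ℝ (Fin d)) :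
    ((d : ℝ) - 2) * (((d : ℝ) - 4) / ((d : ℝ) - 2) - m) / (m * (1 - m)) ≤
      |lap d (V d m D) x| / V d m D x ^ (2 - m : ℝ) ∧
    ‖gradient (V d m D) x‖ ^ 2 / (|lap d (V d m D) x| * V d m D x) ≤
      2 / (((d : ℝ) - 2) * (((d : ℝ) - 4) / ((d : ℝ) - 2) - m)) := by
  have hd2 : (0 : ℝ) < d - 2 := by
    have : (5 : ℝ) ≤ d := by exact_mod_cast hd
    linarith
  have hm1 : m < 1 := hm.trans ((div_lt_one hd2).2 (by linarith))
  have hK : ((d : ℝ) - 2) * (((d : ℝ) - 4) / ((d : ℝ) - 2) - m) = d - 4 - m * (d - 2) := by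
    field_simp
  have hKpos : 0 < (d : ℝ) - 4 - m * (d - 2) := hK ▸ mul_pos hd2 (sub_pos.2 hm)
  rw [hK]
  exact ⟨Barenblatt.div_le_abs_lap_V_div hm0 hm1 hD x,
    Barenblatt.norm_gradient_V_sq_div_le hm0 hm1 hD hKpos x⟩
end
end

section
/- Let $d \ge 5$, $0 < m < m_* = \frac{d-4}{d-2}$ and $D > 0$. Then for every smooth compactly supported $g : \mathbb{R}^d \to \mathbb{R}$, $\int_{\mathbb{R}^d} g^2\, V_D^{2-m}\,dx \le \mathcal{C}_{m,d} \int_{\mathbb{R}^d} |\nabla g|^2\, V_D\,dx$ with $\mathcal{C}_{m,d} = \frac{8m(1-m)}{[(d-2)(m - m_*)]^2}$. -/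
open MeasureTheory Real Filter
noncomputable section

section Aux

variable {d : ℕ}
local notation "E" => EuclideanSpace ℝ (Fin d)

lemma amgm_aux {L X Y : ℝ} (hX : 0 ≤ X) (hY : 0 ≤ Y) (h : L ^ 2 ≤ 4 * (X * Y)) :
    L ≤ X + Y := by
  nlinarith [sq_nonneg (X - Y), sq_nonneg (X + Y - L)]

lemma hasFDerivAt_U (D a : ℝ) (x : E) :
    HasFDerivAt (fun y : E => D + a * ‖y‖ ^ 2) ((2 * a) • (innerSL ℝ x : E →L[ℝ] ℝ)) x := by
  have h := (hasStrictFDerivAt_norm_sq (F := E) x).hasFDerivAt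
  have h2 := (h.const_mul a).const_add D
  refine h2.congr_fderiv ?_
  ext v
  simp [smul_smul]
  ring

lemma hasFDerivAt_Urpow (D a r : ℝ) (x : E) (hU : (0:ℝ) < D + a * ‖x‖ ^ 2) :
    HasFDerivAt (fun y : E => (D + a * ‖y‖ ^ 2) ^ r)
      ((r * (D + a * ‖x‖ ^ 2) ^ (r - 1) * (2 * a)) • (innerSL ℝ x : E →L[ℝ] ℝ)) x := by
  have h := (hasFDerivAt_U D a x).rpow_const (p := r) (Or.inl hU.ne')
  refine h.congr_fderiv ?_
  rw [smul_smul]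

lemma hasFDerivAt_W (D a p k : ℝ) (i : Fin d) (x : E) (hU : (0:ℝ) < D + a * ‖x‖ ^ 2) :
    HasFDerivAt (fun y : E => k * ((D + a * ‖y‖ ^ 2) ^ (-p) * y i))
      (k • (((D + a * ‖x‖ ^ 2) ^ (-p)) • (EuclideanSpace.proj (𝕜 := ℝ) i : E →L[ℝ] ℝ) +
        (x i) • ((-p * (D + a * ‖x‖ ^ 2) ^ (-p - 1) * (2 * a)) • (innerSL ℝ x : E →L[ℝ] ℝ)))) x := by
  exact ((hasFDerivAt_Urpow D a (-p) x hU).mul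
    ((EuclideanSpace.proj (𝕜 := ℝ) i : E →L[ℝ] ℝ).hasFDerivAt)).const_mul k

lemma sum_coord_sq (x : E) : ∑ i, (x i) ^ 2 = ‖x‖ ^ 2 := by
  rw [EuclideanSpace.norm_eq, Real.sq_sqrt (by positivity)]
  simp [Real.norm_eq_abs, sq_abs]

lemma sum_coord_smul_single (x : E) : ∑ i, (x i) • (EuclideanSpace.single i (1:ℝ)) = x := by
  have := (EuclideanSpace.basisFun (Fin d) ℝ).sum_repr x
  simpa [EuclideanSpace.basisFun_apply] using this

lemma pointwise_amgm {m u w t r A Gn N F : ℝ} (hm : 0 < m) (hu : 0 < u) (hw : 0 ≤ w)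
    (ht : 0 ≤ t) (hr : 0 < r) (hGn : 0 ≤ Gn) (hN : 0 ≤ N)
    (hut : w * t = u ^ 2) (hF : |F| ≤ Gn * N) :
    -(2 / m) * (u * (A * F)) ≤ 1 / 2 * (A ^ 2 * (1 / m * (w * r))) +
      2 * (Gn ^ 2 * (1 / m * (t * (N ^ 2 / r)))) := by
  have hAF : -(A * F) ≤ |A| * (Gn * N) := by
    calc -(A * F) ≤ |A * F| := neg_le_abs _
      _ = |A| * |F| := abs_mul _ _
      _ ≤ |A| * (Gn * N) := mul_le_mul_of_nonneg_left hF (abs_nonneg A)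
  have hcoef : (0:ℝ) ≤ 2 / m * u := by positivity
  have h1 : -(2 / m) * (u * (A * F)) ≤ 2 / m * (u * (|A| * (Gn * N))) := by
    have := mul_le_mul_of_nonneg_left hAF hcoef
    nlinarith
  refine h1.trans (amgm_aux (by positivity) (by positivity) ?_)
  have hrN : r * (N ^ 2 / r) = N ^ 2 := by
    field_simp
  have hL2 : (2 / m * (u * (|A| * (Gn * N)))) ^ 2 =
      4 / m ^ 2 * (A ^ 2 * (Gn ^ 2 * (N ^ 2 * (w * t)))) := by
    rw [hut]
    rw [mul_pow, mul_pow, mul_pow, mul_pow, sq_abs, div_pow]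
    ring
  have hR2 : 4 * ((1 / 2 * (A ^ 2 * (1 / m * (w * r)))) *
      (2 * (Gn ^ 2 * (1 / m * (t * (N ^ 2 / r)))))) =
      4 / m ^ 2 * (A ^ 2 * (Gn ^ 2 * ((w * t) * (r * (N ^ 2 / r))))) := by
    field_simp
  rw [hL2, hR2, hrN]
  nlinarith [sq_nonneg A, sq_nonneg Gn, sq_nonneg N, mul_nonneg hw ht]

end Aux

set_option maxHeartbeats 2000000 in
theorem hardy_poincare_subcritical (d : ℕ) (hd : 5 ≤ d) (m D : ℝ) (hm0 : 0 < m)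
    (hm : m < ((d : ℝ) - 4) / ((d : ℝ) - 2)) (hD : 0 < D)
    (g : EuclideanSpace ℝ (Fin d) → ℝ) (hg : ContDiff ℝ (⊤ : ℕ∞) g) (hgs : HasCompactSupport g) :
    ∫ x : EuclideanSpace ℝ (Fin d), (g x) ^ 2 * V d m D x ^ (2 - m : ℝ) ≤
      (8 * m * (1 - m) / (((d : ℝ) - 2) * (m - ((d : ℝ) - 4) / ((d : ℝ) - 2))) ^ 2) *
        ∫ x : EuclideanSpace ℝ (Fin d), ‖gradient g x‖ ^ 2 * V d m D x := by
  -- basic numeric facts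
  have hd5 : (5:ℝ) ≤ (d:ℝ) := by exact_mod_cast hd
  have hd2 : (0:ℝ) < (d:ℝ) - 2 := by linarith
  have hm1 : m < 1 := by
    have : ((d:ℝ) - 4) / ((d:ℝ) - 2) < 1 := by
      rw [div_lt_one hd2]; linarith
    linarith
  have h1m : (0:ℝ) < 1 - m := by linarith
  set a : ℝ := (1 - m) / (2 * m) with ha_def
  have ha : 0 < a := by rw [ha_def]; positivity
  set p : ℝ := (2 - m) / (1 - m) with hp_def
  have hp : 0 < p := by rw [hp_def]; exact div_pos (by linarith) h1m
  set c : ℝ := (d:ℝ) - 2 * p with hc_def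
  have hc : 0 < c := by
    have h1 : m * ((d:ℝ) - 2) < (d:ℝ) - 4 := (lt_div_iff₀ hd2).mp hm
    rw [hc_def, hp_def, sub_pos, ← mul_div_assoc, div_lt_iff₀ h1m]
    nlinarith
  have hcd : c ≤ (d:ℝ) := by
    rw [hc_def]; nlinarith
  set U : EuclideanSpace ℝ (Fin d) → ℝ := fun x => D + a * ‖x‖ ^ 2 with hU_def
  have hU : ∀ x, 0 < U x := fun x => by rw [hU_def]; positivity
  have hUc : Continuous U := by
    rw [hU_def]; fun_prop
  have hUrc : ∀ r : ℝ, Continuous (fun x => U x ^ r) := fun r =>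
    hUc.rpow_const (fun x => Or.inl (hU x).ne')
  set R : EuclideanSpace ℝ (Fin d) → ℝ := fun x => (d:ℝ) * D + a * c * ‖x‖ ^ 2 with hR_def
  have hR : ∀ x, 0 < R x := fun x => by rw [hR_def]; positivity
  have hRc : Continuous R := by rw [hR_def]; fun_prop
  set Φ : EuclideanSpace ℝ (Fin d) → ℝ := fun x => (1 / m) * (U x ^ (-p - 1) * R x) with hΦ_def
  set Ψ : EuclideanSpace ℝ (Fin d) → ℝ :=
    fun x => (1 / m) * (U x ^ ((1:ℝ) - p) * (‖x‖ ^ 2 / R x)) with hΨ_def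
  have hΨc : Continuous Ψ := by
    rw [hΨ_def]
    exact continuous_const.mul ((hUrc _).mul
      ((continuous_norm.pow 2).div hRc (fun x => (hR x).ne')))
  have hΦc : Continuous Φ := by
    rw [hΦ_def]
    exact continuous_const.mul ((hUrc _).mul hRc)
  -- V in terms of U
  have hVU : ∀ x, V d m D x = U x ^ ((1:ℝ) - p) := by
    intro x
    have h : -(1 / (1 - m)) = (1:ℝ) - p := by
      rw [hp_def]; field_simp; ring
    rw [V, ← h, hU_def, ha_def]
  have hV2m : ∀ x, V d m D x ^ (2 - m : ℝ) = U x ^ (-p) := by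
    intro x
    rw [hVU x, ← Real.rpow_mul (hU x).le]
    congr 1
    rw [hp_def]; field_simp; ring
  have hVc : Continuous (V d m D) := by
    have : V d m D = fun x => U x ^ ((1:ℝ) - p) := funext hVU
    rw [this]; exact hUrc _
  have hVnn : ∀ x, 0 ≤ V d m D x := fun x => by
    rw [hVU x]; positivity
  -- rpow shift
  have hshift : ∀ x, U x ^ (-p) = U x ^ (-p - 1) * U x := by
    intro x
    have h2 : (-p - 1) + 1 = -p := by ring
    conv_lhs => rw [← h2]
    rw [Real.rpow_add_one (hU x).ne']
  -- the vector field
  set W : Fin d → EuclideanSpace ℝ (Fin d) → ℝ :=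
    fun i y => (-(1/m)) * (U y ^ (-p) * y i) with hW_def
  have hWder : ∀ i x, HasFDerivAt (W i)
      ((-(1/m)) • ((U x ^ (-p)) • (EuclideanSpace.proj (𝕜 := ℝ) i) +
        (x i) • ((-p * U x ^ (-p - 1) * (2 * a)) • (innerSL ℝ x)))) x := by
    intro i x
    rw [hW_def, hU_def]
    exact hasFDerivAt_W D a p (-(1/m)) i x (hU x)
  have hWdiff : ∀ i, Differentiable ℝ (W i) := fun i x => (hWder i x).differentiableAt
  have hWc : ∀ i, Continuous (W i) := by
    intro i
    rw [hW_def]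
    exact continuous_const.mul ((hUrc _).mul (EuclideanSpace.proj (𝕜 := ℝ) i).continuous)
  set W' : Fin d → EuclideanSpace ℝ (Fin d) → ℝ :=
    fun i x => (-(1/m)) * (U x ^ (-p) + (-p * U x ^ (-p - 1) * (2 * a)) * (x i) ^ 2) with hW'_def
  have hWfderiv : ∀ i x, fderiv ℝ (W i) x (EuclideanSpace.single i 1) = W' i x := by
    intro i x
    rw [(hWder i x).fderiv, hW'_def]
    simp [EuclideanSpace.inner_single_right, EuclideanSpace.single_apply, real_inner_comm]
    ring
  have hW'c : ∀ i, Continuous (W' i) := by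
    intro i
    rw [hW'_def]
    exact continuous_const.mul ((hUrc _).add (((continuous_const.mul (hUrc _)).mul
      continuous_const).mul (((EuclideanSpace.proj (𝕜 := ℝ) i).continuous).pow 2)))
  -- the squared function
  set G2 : EuclideanSpace ℝ (Fin d) → ℝ := fun y => (g y) ^ 2 with hG2_def
  have hgd : Differentiable ℝ g := hg.differentiable (by simp)
  have hgc : Continuous g := hg.continuous
  have hG2der : ∀ x, HasFDerivAt G2 ((2 * g x) • fderiv ℝ g x) x := by
    intro x
    have h := (hgd x).hasFDerivAt.mul (hgd x).hasFDerivAt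
    rw [hG2_def]
    have h2 : (fun y => (g y) ^ 2) = fun y => g y * g y := by
      funext y; ring
    rw [h2]
    refine h.congr_fderiv ?_
    rw [two_mul, add_smul]
  have hG2diff : Differentiable ℝ G2 := fun x => (hG2der x).differentiableAt
  have hG2fderiv : ∀ x v, fderiv ℝ G2 x v = 2 * g x * fderiv ℝ g x v := by
    intro x v
    rw [(hG2der x).fderiv]
    simp [mul_assoc]
  have hfdc : Continuous (fderiv ℝ g) := hg.continuous_fderiv (by simp)
  have hfdac : ∀ v, Continuous (fun x => fderiv ℝ g x v) :=
    fun v => hfdc.clm_apply continuous_const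
  have hfxx : Continuous (fun x => fderiv ℝ g x x) := hfdc.clm_apply continuous_id
  -- integrability helper
  have hint : ∀ k : EuclideanSpace ℝ (Fin d) → ℝ, Continuous k →
      Integrable (fun x => g x * k x) := by
    intro k hk
    exact (hgc.mul hk).integrable_of_hasCompactSupport hgs.mul_right
  -- integration by parts for each coordinate
  have hIBP : ∀ i, ∫ x, G2 x * fderiv ℝ (W i) x (EuclideanSpace.single i 1) =
      -∫ x, fderiv ℝ G2 x (EuclideanSpace.single i 1) * W i x := by
    intro i
    apply integral_mul_fderiv_eq_neg_fderiv_mul_of_integrable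
    · have h : (fun x => fderiv ℝ G2 x (EuclideanSpace.single i 1) * W i x) =
          fun x => g x * (2 * fderiv ℝ g x (EuclideanSpace.single i 1) * W i x) := by
        funext x; rw [hG2fderiv]; ring
      rw [h]
      exact hint _ ((continuous_const.mul (hfdac _)).mul (hWc i))
    · have h : (fun x => G2 x * fderiv ℝ (W i) x (EuclideanSpace.single i 1)) =
          fun x => g x * (g x * W' i x) := by
        funext x; rw [hWfderiv, hG2_def]; ring
      rw [h]
      exact hint _ (hgc.mul (hW'c i))
    · have h : (fun x => G2 x * W i x) = fun x => g x * (g x * W i x) := by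
        funext x; rw [hG2_def]; ring
      rw [h]
      exact hint _ (hgc.mul (hWc i))
    · exact fun x _ => hG2diff x
    · exact fun x _ => hWdiff i x
  -- sum of the second derivatives is -Φ
  have hsumW' : ∀ x, ∑ i, W' i x = -Φ x := by
    intro x
    rw [hW'_def]
    simp only
    rw [← Finset.mul_sum, Finset.sum_add_distrib, Finset.sum_const, ← Finset.mul_sum,
      sum_coord_sq, Finset.card_univ, Fintype.card_fin, nsmul_eq_mul]
    rw [hshift x, hΦ_def, hR_def, hU_def, hc_def]
    simp only
    ring
  -- sum of the first-order terms
  have hsumFG : ∀ x, ∑ i, fderiv ℝ G2 x (EuclideanSpace.single i 1) * W i x =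
      (-(2/m)) * (U x ^ (-p) * (g x * fderiv ℝ g x x)) := by
    intro x
    have h1 : ∀ i, fderiv ℝ G2 x (EuclideanSpace.single i 1) * W i x =
        (-(2/m)) * (U x ^ (-p) * (g x * (fderiv ℝ g x ((x i) • EuclideanSpace.single i 1)))) := by
      intro i
      rw [hG2fderiv, hW_def]
      simp only [(fderiv ℝ g x).map_smul, smul_eq_mul]
      ring
    rw [Finset.sum_congr rfl (fun i _ => h1 i), ← Finset.mul_sum]
    congr 1
    rw [← Finset.mul_sum]
    congr 1
    rw [← Finset.mul_sum]
    congr 1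
    rw [← map_sum, sum_coord_smul_single]
  -- Key integral identity
  have hMain : ∫ x, G2 x * Φ x = (-(2/m)) * ∫ x, U x ^ (-p) * (g x * fderiv ℝ g x x) := by
    have hS1 : ∑ i, ∫ x, G2 x * fderiv ℝ (W i) x (EuclideanSpace.single i 1) =
        -∫ x, G2 x * Φ x := by
      have h1 : ∀ i, ∫ x, G2 x * fderiv ℝ (W i) x (EuclideanSpace.single i 1) =
          ∫ x, G2 x * W' i x := by
        intro i
        congr 1
        funext x
        rw [hWfderiv]
      rw [Finset.sum_congr rfl (fun i _ => h1 i)]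
      rw [← integral_finset_sum]
      · rw [← integral_neg]
        congr 1
        funext x
        rw [← Finset.mul_sum, hsumW']
        ring
      · intro i _
        have h : (fun x => G2 x * W' i x) = fun x => g x * (g x * W' i x) := by
          funext x; rw [hG2_def]; ring
        rw [h]
        exact hint _ (hgc.mul (hW'c i))
    have hS2 : ∑ i, ∫ x, fderiv ℝ G2 x (EuclideanSpace.single i 1) * W i x =
        (-(2/m)) * ∫ x, U x ^ (-p) * (g x * fderiv ℝ g x x) := by
      rw [← integral_finset_sum]
      · rw [← integral_const_mul]
        congr 1
        funext x
        rw [hsumFG]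
      · intro i _
        have h : (fun x => fderiv ℝ G2 x (EuclideanSpace.single i 1) * W i x) =
            fun x => g x * (2 * fderiv ℝ g x (EuclideanSpace.single i 1) * W i x) := by
          funext x; rw [hG2fderiv]; ring
        rw [h]
        exact hint _ ((continuous_const.mul (hfdac _)).mul (hWc i))
    have h4 : ∫ x, G2 x * Φ x =
        -∑ i, ∫ x, G2 x * fderiv ℝ (W i) x (EuclideanSpace.single i 1) := by
      rw [hS1, neg_neg]
    rw [h4, Finset.sum_congr rfl (fun i _ => hIBP i), Finset.sum_neg_distrib, neg_neg, hS2]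
  -- gradient facts
  have hgradeq : gradient g = fun x =>
      (InnerProductSpace.toDual ℝ (EuclideanSpace ℝ (Fin d))).symm (fderiv ℝ g x) := rfl
  have hgradc : Continuous (gradient g) := by
    rw [hgradeq]
    exact (InnerProductSpace.toDual ℝ (EuclideanSpace ℝ (Fin d))).symm.continuous.comp hfdc
  have hgrads : HasCompactSupport (gradient g) := by
    rw [hgradeq]
    exact (hgs.fderiv (𝕜 := ℝ)).comp_left (map_zero _)
  have hgradint : ∀ k : EuclideanSpace ℝ (Fin d) → ℝ, Continuous k →
      Integrable (fun x => ‖gradient g x‖ ^ 2 * k x) := by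
    intro k hk
    apply ((hgradc.norm.pow 2).mul hk).integrable_of_hasCompactSupport
    apply hgrads.mono
    intro x hx
    simp only [Function.mem_support] at hx ⊢
    intro h0
    apply hx
    simp [h0]
  -- integrability facts
  have intXφ : Integrable (fun x => G2 x * Φ x) := by
    have h : (fun x => G2 x * Φ x) = fun x => g x * (g x * Φ x) := by
      funext x; rw [hG2_def]; ring
    rw [h]; exact hint _ (hgc.mul hΦc)
  have intY : Integrable (fun x => ‖gradient g x‖ ^ 2 * Ψ x) := hgradint _ hΨc
  have intJ : Integrable (fun x => ‖gradient g x‖ ^ 2 * V d m D x) := hgradint _ hVc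
  have intL : Integrable (fun x => (-(2/m)) * (U x ^ (-p) * (g x * fderiv ℝ g x x))) := by
    have h : (fun x => (-(2/m)) * (U x ^ (-p) * (g x * fderiv ℝ g x x))) =
        fun x => g x * ((-(2/m)) * (U x ^ (-p) * fderiv ℝ g x x)) := by
      funext x; ring
    rw [h]; exact hint _ (continuous_const.mul ((hUrc _).mul hfxx))
  -- main inequality via AM-GM
  have hI2 : ∫ x, G2 x * Φ x ≤ (1/2) * (∫ x, G2 x * Φ x) +
      2 * ∫ x, ‖gradient g x‖ ^ 2 * Ψ x := by
    have h0 : ∫ x, G2 x * Φ x =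
        ∫ x, (-(2/m)) * (U x ^ (-p) * (g x * fderiv ℝ g x x)) := by
      rw [hMain, ← integral_const_mul]
    have hsplit : ∫ x, ((1/2) * (G2 x * Φ x) + 2 * (‖gradient g x‖ ^ 2 * Ψ x)) =
        (1/2) * (∫ x, G2 x * Φ x) + 2 * ∫ x, ‖gradient g x‖ ^ 2 * Ψ x := by
      rw [integral_add (intXφ.const_mul _) (intY.const_mul _), integral_const_mul,
        integral_const_mul]
    refine h0.trans_le (le_of_le_of_eq ?_ hsplit)
    apply integral_mono intL ((intXφ.const_mul _).add (intY.const_mul _))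
    intro x
    have hfdx : |fderiv ℝ g x x| ≤ ‖gradient g x‖ * ‖x‖ := by
      have h : inner ℝ (gradient g x) x = fderiv ℝ g x x := by
        rw [gradient, InnerProductSpace.toDual_symm_apply]
      rw [← h]
      exact abs_real_inner_le_norm _ _
    have hut : U x ^ (-p - 1) * U x ^ ((1:ℝ) - p) = (U x ^ (-p)) ^ 2 := by
      rw [sq, ← Real.rpow_add (hU x), ← Real.rpow_add (hU x)]
      ring_nf
    simp only [hG2_def, hΦ_def, hΨ_def]
    exact pointwise_amgm hm0 (Real.rpow_pos_of_pos (hU x) _)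
      (Real.rpow_pos_of_pos (hU x) _).le (Real.rpow_pos_of_pos (hU x) _).le (hR x)
      (norm_nonneg _) (norm_nonneg _) hut hfdx
  have hI4 : ∫ x, G2 x * Φ x ≤ 4 * ∫ x, ‖gradient g x‖ ^ 2 * Ψ x := by linarith
  -- left-hand side comparison
  have hLHS : ∫ x, (g x) ^ 2 * V d m D x ^ (2 - m : ℝ) ≤ (m/c) * ∫ x, G2 x * Φ x := by
    have h0 : (fun x => (g x) ^ 2 * V d m D x ^ (2 - m : ℝ)) =
        fun x => G2 x * U x ^ (-p) := by
      funext x; rw [hV2m, hG2_def]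
    rw [h0, ← integral_const_mul]
    have intLHS : Integrable (fun x => G2 x * U x ^ (-p)) := by
      have h : (fun x => G2 x * U x ^ (-p)) = fun x => g x * (g x * U x ^ (-p)) := by
        funext x; rw [hG2_def]; ring
      rw [h]; exact hint _ (hgc.mul (hUrc _))
    apply integral_mono intLHS (intXφ.const_mul _)
    intro x
    have hcU : c * U x ≤ R x := by
      simp only [hU_def, hR_def]
      nlinarith [mul_le_mul_of_nonneg_right hcd hD.le, sq_nonneg ‖x‖, mul_pos ha hc]
    have hw := Real.rpow_pos_of_pos (hU x) (-p - 1)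
    have key : U x ^ (-p) ≤ (m/c) * Φ x := by
      rw [hshift x, hΦ_def]
      have h2 : (m/c) * ((1/m) * (U x ^ (-p-1) * R x)) = (U x ^ (-p-1) * R x) / c := by
        field_simp
      rw [h2, le_div_iff₀ hc]
      nlinarith [mul_le_mul_of_nonneg_left hcU hw.le]
    have hG2nn : (0:ℝ) ≤ G2 x := by rw [hG2_def]; positivity
    calc G2 x * U x ^ (-p) ≤ G2 x * ((m/c) * Φ x) :=
          mul_le_mul_of_nonneg_left key hG2nn
      _ = (m/c) * (G2 x * Φ x) := by ring
  -- Ψ vs V comparison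
  have hK : ∫ x, ‖gradient g x‖ ^ 2 * Ψ x ≤
      (1/(m*a*c)) * ∫ x, ‖gradient g x‖ ^ 2 * V d m D x := by
    rw [← integral_const_mul]
    apply integral_mono intY (intJ.const_mul _)
    intro x
    have ht := Real.rpow_pos_of_pos (hU x) ((1:ℝ) - p)
    have hΨV : Ψ x ≤ (1/(m*a*c)) * V d m D x := by
      rw [hΨ_def, hVU x]
      have h1 : ‖x‖ ^ 2 / R x ≤ 1/(a*c) := by
        rw [div_le_div_iff₀ (hR x) (by positivity)]
        simp only [hR_def]
        nlinarith [mul_pos (show (0:ℝ) < (d:ℝ) by linarith) hD]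
      calc (1/m) * (U x ^ ((1:ℝ)-p) * (‖x‖ ^ 2 / R x)) ≤
            (1/m) * (U x ^ ((1:ℝ)-p) * (1/(a*c))) := by
            apply mul_le_mul_of_nonneg_left
              (mul_le_mul_of_nonneg_left h1 ht.le) (by positivity)
        _ = (1/(m*a*c)) * U x ^ ((1:ℝ)-p) := by simp [mul_inv]; ring
    calc ‖gradient g x‖ ^ 2 * Ψ x ≤ ‖gradient g x‖ ^ 2 * ((1/(m*a*c)) * V d m D x) :=
          mul_le_mul_of_nonneg_left hΨV (sq_nonneg _)
      _ = (1/(m*a*c)) * (‖gradient g x‖ ^ 2 * V d m D x) := by ring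
  -- constant identity
  have hJnn : 0 ≤ ∫ x, ‖gradient g x‖ ^ 2 * V d m D x :=
    integral_nonneg fun x => mul_nonneg (sq_nonneg _) (hVnn x)
  have h5 : m - ((d:ℝ)-4)/((d:ℝ)-2) ≠ 0 := (sub_neg.mpr hm).ne
  have h6 : (d:ℝ) - 2*((2-m)/(1-m)) ≠ 0 := by
    have h := hc
    rw [hc_def, hp_def] at h
    exact h.ne'
  have hCeq : 8*m*(1-m)/((((d:ℝ)-2)*(m-((d:ℝ)-4)/((d:ℝ)-2)))^2) = 4/(a*c^2) := by
    have hs : ((d:ℝ)-2)*(m-((d:ℝ)-4)/((d:ℝ)-2)) = m*((d:ℝ)-2)-((d:ℝ)-4) := by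
      field_simp
    have hsne : m*((d:ℝ)-2)-((d:ℝ)-4) ≠ 0 := by
      have h1 : m * ((d:ℝ) - 2) < (d:ℝ) - 4 := (lt_div_iff₀ hd2).mp hm
      intro h; nlinarith
    have hc2 : c = (((d:ℝ)-4) - m*((d:ℝ)-2))/(1-m) := by
      rw [hc_def, hp_def]
      field_simp
      ring
    rw [hs, div_eq_div_iff (pow_ne_zero 2 hsne) (mul_pos ha (pow_pos hc 2)).ne']
    rw [ha_def, hc2, div_pow]
    field_simp
    ring
  calc ∫ x, (g x) ^ 2 * V d m D x ^ (2 - m : ℝ) ≤ (m/c) * ∫ x, G2 x * Φ x := hLHS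
    _ ≤ (m/c) * (4 * ∫ x, ‖gradient g x‖ ^ 2 * Ψ x) :=
        mul_le_mul_of_nonneg_left hI4 (by positivity)
    _ ≤ (m/c) * (4 * ((1/(m*a*c)) * ∫ x, ‖gradient g x‖ ^ 2 * V d m D x)) := by
        apply mul_le_mul_of_nonneg_left _ (by positivity)
        exact mul_le_mul_of_nonneg_left hK (by norm_num)
    _ = (4/(a*c^2)) * ∫ x, ‖gradient g x‖ ^ 2 * V d m D x := by
        field_simp [hm0.ne', ha.ne', hc.ne']
    _ = (8 * m * (1 - m) / (((d : ℝ) - 2) * (m - ((d : ℝ) - 4) / ((d : ℝ) - 2))) ^ 2) *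
        ∫ x, ‖gradient g x‖ ^ 2 * V d m D x := by
        rw [hCeq]
end
end
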